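/- Let G be a connected graph whose complement has a connected component isomorphic to the star K_{1,n} for some n ≥ 2. Then no vertex of that component is a basis forced vertex of G. -/

import Mathlib

open SimpleGraph

def IsResolving {V : Type*} (G : SimpleGraph V) (R : Set V) : Prop :=
  ∀ x y : V, x ≠ y → ∃ r ∈ R, G.dist r x ≠ G.dist r y

noncomputable def metricDim {V : Type*} (G : SimpleGraph V) : ℕ :=
  sInf {n | ∃ R : Set V, IsResolving G R ∧ R.ncard = n}

def IsMetricBasis {V : Type*} (G : SimpleGraph V) (R : Set V) : Prop :=
  IsResolving G R ∧ R.ncard = metricDim G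

def IsBasisForced {V : Type*} (G : SimpleGraph V) (v : V) : Prop :=
  ∀ R : Set V, IsMetricBasis G R → v ∈ R

/-!
Let `c` be the centre of the star component `C` of `Gᶜ`, and let `v ∈ C` lie in a metric basis `R`.
Every vertex outside `C` is adjacent in `G` to every vertex of `C`, so vertices of `C` never
separate two vertices outside `C`, while a vertex `x ∈ C` is separated from every vertex outside `C`
by any `Gᶜ`-neighbour of `x`. Hence, if `R` misses at most one vertex of `C`, replacing `R ∩ C` by
`C \ {v}` gives a metric basis avoiding `v`. Otherwise, as the leaves are pairwise twins in `G` and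
a resolving set contains one of any two twins, `R` misses `c` and some leaf `m`; then `v` is a leaf
too, and the transposition of the twins `v` and `m`, an automorphism of `G`, maps `R` to a metric
basis avoiding `v`.
-/

lemma Set.ncard_sdiff_union_sdiff_singleton_le {α : Type*} [Finite α] {A B : Set α} {x : α}
    (hBA : (B \ A).Subsingleton) (hx : x ∈ B) : (A \ B ∪ B \ {x}).ncard ≤ A.ncard := by
  have hB : (B \ {x}).ncard + 1 = B.ncard := Set.ncard_sdiff_singleton_add_one hx
  have hBsplit := Set.ncard_inter_add_ncard_sdiff_eq_ncard B A
  have hAsplit := Set.ncard_inter_add_ncard_sdiff_eq_ncard A B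
  have hBA' : (B \ A).ncard ≤ 1 := Set.ncard_le_one_iff_subsingleton.mpr hBA
  have hunion := Set.ncard_union_le (A \ B) (B \ {x})
  rw [Set.inter_comm] at hBsplit
  omega

namespace SimpleGraph

variable {V W : Type*} {G : SimpleGraph V}

lemma edist_map_le {G' : SimpleGraph W} (f : G →g G') (u v : V) :
    G'.edist (f u) (f v) ≤ G.edist u v := by
  by_cases h : G.Reachable u v
  · obtain ⟨p, hp⟩ := h.exists_walk_length_eq_edist
    simpa [← hp] using edist_le (p.map f)
  · simp [edist_eq_top_of_not_reachable h]

lemma Iso.edist_eq {G' : SimpleGraph W} (φ : G ≃g G') (u v : V) :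
    G'.edist (φ u) (φ v) = G.edist u v :=
  le_antisymm (edist_map_le φ.toHom u v) (by simpa using edist_map_le φ.symm.toHom (φ u) (φ v))

lemma Iso.dist_eq {G' : SimpleGraph W} (φ : G ≃g G') (u v : V) :
    G'.dist (φ u) (φ v) = G.dist u v := by
  rw [dist, dist, φ.edist_eq]

lemma adj_of_mem_supp_compl {C : Gᶜ.ConnectedComponent} {u v : V} (hu : u ∈ C.supp)
    (hv : v ∉ C.supp) : G.Adj u v := by
  have huv : u ≠ v := fun h => hv (h ▸ hu)
  by_contra hadj
  exact hv (C.mem_supp_of_adj_mem_supp hu ((compl_adj G u v).mpr ⟨huv, hadj⟩))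

def AreTwins (G : SimpleGraph V) (u w : V) : Prop :=
  ∀ x, x ≠ u → x ≠ w → (G.Adj u x ↔ G.Adj w x)

lemma areTwins_of_neighborSet_compl_eq {u w : V} (h : Gᶜ.neighborSet u = Gᶜ.neighborSet w) :
    G.AreTwins u w := by
  intro x hxu hxw
  have hx : Gᶜ.Adj u x ↔ Gᶜ.Adj w x := Set.ext_iff.mp h x
  simp only [compl_adj] at hx
  tauto

def AreTwins.swapIso [DecidableEq V] {u w : V} (h : G.AreTwins u w) : G ≃g G where
  toEquiv := Equiv.swap u w
  map_rel_iff' {a b} := by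
    simp only [Equiv.swap_apply_def]
    split_ifs <;> subst_vars <;> grind [AreTwins, G.adj_comm, SimpleGraph.irrefl]

lemma neighborSet_eq_of_iso_star {H : SimpleGraph V} {C : H.ConnectedComponent} {n : ℕ}
    (φ : H.induce C.supp ≃g completeBipartiteGraph (Fin 1) (Fin n)) {l : V} (hl : l ∈ C.supp)
    (hlc : l ≠ φ.symm (.inl 0)) : H.neighborSet l = {(φ.symm (.inl 0) : V)} := by
  obtain ⟨j, hj⟩ : ∃ j, φ ⟨l, hl⟩ = .inr j := by
    rcases h : φ ⟨l, hl⟩ with i | j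
    · exact absurd (by rw [← Subsingleton.elim i 0, ← h]; simp) hlc
    · exact ⟨j, rfl⟩
  ext x
  simp only [mem_neighborSet, Set.mem_singleton_iff]
  constructor
  · intro hx
    have hxC := C.mem_supp_of_adj_mem_supp hl hx
    have : (completeBipartiteGraph (Fin 1) (Fin n)).Adj (φ ⟨l, hl⟩) (φ ⟨x, hxC⟩) :=
      φ.map_adj_iff.mpr hx
    rw [hj] at this
    rcases h : φ ⟨x, hxC⟩ with i | k
    · rw [← Subsingleton.elim i 0, ← h]; simp
    · simp [h] at this
  · rintro rfl
    have : (completeBipartiteGraph (Fin 1) (Fin n)).Adj (φ ⟨l, hl⟩) (φ (φ.symm (.inl 0))) := by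
      simp [hj]
    exact φ.map_adj_iff.mp this

end SimpleGraph

section MetricBasis

variable {V : Type*} {G : SimpleGraph V}

lemma metricDim_le_ncard {R : Set V} (hR : IsResolving G R) : metricDim G ≤ R.ncard :=
  Nat.sInf_le ⟨R, hR, rfl⟩

lemma IsMetricBasis.of_ncard_le {R S : Set V} (hR : IsMetricBasis G R) (hS : IsResolving G S)
    (hSR : S.ncard ≤ R.ncard) : IsMetricBasis G S :=
  ⟨hS, le_antisymm (hR.2 ▸ hSR) (metricDim_le_ncard hS)⟩

lemma exists_dist_ne_of_mem (hG : G.Connected) {R : Set V} {a b : V} (ha : a ∈ R) (hab : a ≠ b) :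
    ∃ r ∈ R, G.dist r a ≠ G.dist r b :=
  ⟨a, ha, by rw [dist_self]; exact (hG.pos_dist_of_ne hab).ne⟩

lemma exists_isMetricBasis (hG : G.Connected) : ∃ R, IsMetricBasis G R :=
  Nat.sInf_mem (s := {n | ∃ R : Set V, IsResolving G R ∧ R.ncard = n})
    ⟨_, Set.univ, fun _ _ hab => exists_dist_ne_of_mem hG trivial hab, rfl⟩

lemma IsResolving.image_iso {W : Type*} {G' : SimpleGraph W} {R : Set V} (hR : IsResolving G R)
    (φ : G ≃g G') : IsResolving G' (φ '' R) := by
  intro x y hxy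
  obtain ⟨r, hr, hd⟩ := hR (φ.symm x) (φ.symm y) (by simpa using hxy)
  refine ⟨φ r, Set.mem_image_of_mem φ hr, ?_⟩
  simpa [← φ.dist_eq r] using hd

lemma IsMetricBasis.image_iso {R : Set V} (hR : IsMetricBasis G R) (φ : G ≃g G) :
    IsMetricBasis G (φ '' R) :=
  hR.of_ncard_le (hR.1.image_iso φ) (Set.ncard_image_of_injective R φ.injective).le

lemma IsResolving.mem_or_mem_of_areTwins {R : Set V} (hR : IsResolving G R) {u w : V}
    (h : G.AreTwins u w) (huw : u ≠ w) : u ∈ R ∨ w ∈ R := by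
  classical
  obtain ⟨r, hr, hd⟩ := hR u w huw
  by_contra! hu
  have hσr : h.swapIso r = r :=
    Equiv.swap_apply_of_ne_of_ne (fun e => hu.1 (e ▸ hr)) (fun e => hu.2 (e ▸ hr))
  have hσu : h.swapIso u = w := Equiv.swap_apply_left u w
  exact hd (by rw [← h.swapIso.dist_eq r u, hσr, hσu])

lemma IsResolving.sdiff_supp_union_supp_sdiff_singleton (hG : G.Connected) {R : Set V}
    (hR : IsResolving G R) {C : Gᶜ.ConnectedComponent} {x y : V} (hx : x ∈ C.supp)
    (hxy : Gᶜ.Adj x y) : IsResolving G (R \ C.supp ∪ C.supp \ {x}) := by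
  set S := R \ C.supp ∪ C.supp \ {x}
  have dist_eq_one : ∀ a ∈ C.supp, ∀ b ∉ C.supp, G.dist a b = 1 := fun a ha b hb =>
    dist_eq_one_iff_adj.mpr (adj_of_mem_supp_compl ha hb)
  have from_supp : ∀ a b, a ≠ b → a ∈ C.supp →
      ∃ r ∈ S, G.dist r a ≠ G.dist r b := by
    intro a b hab ha
    by_cases hax : a = x
    · subst hax
      by_cases hb : b ∈ C.supp
      · obtain ⟨r, hr, hd⟩ := exists_dist_ne_of_mem hG (R := S) (Or.inr ⟨hb, hab.symm⟩) hab.symm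
        exact ⟨r, hr, hd.symm⟩
      · have hyC : y ∈ C.supp := C.mem_supp_of_adj_mem_supp ha hxy
        refine ⟨y, Or.inr ⟨hyC, hxy.ne.symm⟩, ?_⟩
        rw [dist_eq_one y hyC b hb, Ne, dist_eq_one_iff_adj]
        exact fun hadj => ((compl_adj G a y).mp hxy).2 hadj.symm
    · exact exists_dist_ne_of_mem hG (Or.inr ⟨ha, hax⟩) hab
  intro a b hab
  by_cases ha : a ∈ C.supp
  · exact from_supp a b hab ha
  by_cases hb : b ∈ C.supp
  · obtain ⟨r, hr, hd⟩ := from_supp b a hab.symm hb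
    exact ⟨r, hr, hd.symm⟩
  obtain ⟨r, hr, hd⟩ := hR a b hab
  have hrC : r ∉ C.supp := fun hrC => hd (by rw [dist_eq_one r hrC a ha, dist_eq_one r hrC b hb])
  exact ⟨r, Or.inl ⟨hr, hrC⟩, hd⟩

end MetricBasis

theorem not_isBasisForced_of_star_component {V : Type*} [Finite V] {G : SimpleGraph V}
    (hG : G.Connected) {C : Gᶜ.ConnectedComponent} {c : V} (hC : C.supp.Nontrivial)
    (hleaf : ∀ l ∈ C.supp, l ≠ c → Gᶜ.neighborSet l = {c}) {v : V} (hv : v ∈ C.supp) :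
    ¬ IsBasisForced G v := by
  classical
  have adj_centre : ∀ l ∈ C.supp, l ≠ c → Gᶜ.Adj l c := fun l hl hlc => by
    simpa [← mem_neighborSet] using (hleaf l hl hlc).symm ▸ Set.mem_singleton c
  have twins : ∀ l ∈ C.supp, l ≠ c → ∀ l' ∈ C.supp, l' ≠ c → G.AreTwins l l' :=
    fun l hl hlc l' hl' hl'c =>
      areTwins_of_neighborSet_compl_eq (by rw [hleaf l hl hlc, hleaf l' hl' hl'c])
  obtain ⟨R, hR⟩ := exists_isMetricBasis hG
  intro hforced
  have hvR := hforced R hR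
  by_cases hsub : (C.supp \ R).Subsingleton
  · obtain ⟨y, hy⟩ : ∃ y, Gᶜ.Adj v y := by
      by_cases hvc : v = c
      · obtain ⟨l, hl, hlc⟩ := hC.exists_ne c
        exact ⟨l, hvc ▸ (adj_centre l hl hlc).symm⟩
      · exact ⟨c, adj_centre v hv hvc⟩
    have hS := hR.of_ncard_le (hR.1.sdiff_supp_union_supp_sdiff_singleton hG hv hy)
      (Set.ncard_sdiff_union_sdiff_singleton_le hsub hv)
    simpa [hv] using hforced _ hS
  · have hcR : c ∉ R := fun hcR => hsub fun l hl l' hl' => by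
      by_contra hll'
      have hlc : l ≠ c := fun e => hl.2 (e ▸ hcR)
      have hl'c : l' ≠ c := fun e => hl'.2 (e ▸ hcR)
      exact (hR.1.mem_or_mem_of_areTwins (twins l hl.1 hlc l' hl'.1 hl'c) hll').elim hl.2 hl'.2
    obtain ⟨m, hm, hmc⟩ := (Set.not_subsingleton_iff.mp hsub).exists_ne c
    have hvc : v ≠ c := fun e => hcR (e ▸ hvR)
    obtain ⟨r, hr, hrv⟩ := hforced _ (hR.image_iso (twins v hv hvc m hm.1 hmc).swapIso)
    have hrm : r = m := by
      rw [AreTwins.swapIso, RelIso.coe_fn_mk, Equiv.swap_apply_eq_iff, Equiv.swap_apply_left] at hrv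
      exact hrv
    exact hm.2 (hrm ▸ hr)

theorem stmt12 {V : Type*} [Fintype V] (G : SimpleGraph V) (hG : G.Connected)
    (C : Gᶜ.ConnectedComponent) (n : ℕ) (hn : 2 ≤ n)
    (hiso : Nonempty ((Gᶜ.induce C.supp) ≃g completeBipartiteGraph (Fin 1) (Fin n))) :
    ∀ v ∈ C.supp, ¬ IsBasisForced G v := by
  obtain ⟨φ⟩ := hiso
  have hC : C.supp.Nontrivial :=
    ⟨φ.symm (.inl 0), (φ.symm _).2, φ.symm (.inr ⟨0, by omega⟩), (φ.symm _).2,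
      fun h => Sum.inl_ne_inr (φ.symm.injective (Subtype.ext h))⟩
  exact fun v hv => not_isBasisForced_of_star_component hG hC
    (fun l hl hlc => neighborSet_eq_of_iso_star φ hl hlc) hv
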